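/- Let Θ_{y,ε}(x) = [1 + exp(-2ε(x - y - ε/2)/((x - y - ε/2)² - ε²/4))]^{-1} for y < x < y + ε, extended by Θ = 1 for x ≤ y and Θ = 0 for x ≥ y + ε. Then Θ_{y,ε} is differentiable on (y, y+ε) and sup_{x ∈ ℝ} |Θ_{y,ε}′(x)| = 2/ε. -/

import Mathlib

/-- The smooth step function `Θ_{y,ε}`: equal to `1` for `x ≤ y`, to `0` for
`x ≥ y + ε`, and interpolating via the stated exponential formula in between. -/
noncomputable def smoothStep (y ε x : ℝ) : ℝ :=
  if x ≤ y then 1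
  else if y + ε ≤ x then 0
  else (1 + Real.exp (-(2 * ε * (x - y - ε / 2)) /
        ((x - y - ε / 2) ^ 2 - ε ^ 2 / 4)))⁻¹

lemma aux_exp_half (s : ℝ) (hs : 0 ≤ s) : 2 + s^2 ≤ Real.exp s + Real.exp (-s) := by
  have h1 : s/2 ≤ Real.sinh (s/2) := Real.self_le_sinh_iff.mpr (by linarith)
  rw [Real.sinh_eq] at h1
  have ha := Real.exp_pos (s/2)
  have hb := Real.exp_pos (-(s/2))
  have hm : Real.exp (s/2) * Real.exp (-(s/2)) = 1 := by rw [← Real.exp_add]; simp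
  have h2 : Real.exp s = Real.exp (s/2) * Real.exp (s/2) := by rw [← Real.exp_add]; ring_nf
  have h3 : Real.exp (-s) = Real.exp (-(s/2)) * Real.exp (-(s/2)) := by
    rw [← Real.exp_add]; ring_nf
  nlinarith [sq_nonneg (Real.exp (s/2) - Real.exp (-(s/2)))]

lemma aux_exp (s : ℝ) : 2 + s^2 ≤ Real.exp s + Real.exp (-s) := by
  rcases le_total 0 s with hs | hs
  · exact aux_exp_half s hs
  · have := aux_exp_half (-s) (by linarith)
    rw [neg_neg] at this
    nlinarith

lemma key_exp (s : ℝ) : Real.exp s / (1 + Real.exp s)^2 ≤ 1 / (4 + s^2) := by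
  have he := Real.exp_pos s
  have hm : Real.exp s * Real.exp (-s) = 1 := by rw [← Real.exp_add]; simp
  rw [div_le_div_iff₀ (by positivity) (by positivity)]
  have h := aux_exp s
  nlinarith [Real.exp_pos (-s)]

-- derivative formula on the open interval
lemma smoothStep_hasDerivAt (y ε : ℝ) (hε : 0 < ε) {x : ℝ} (hx : x ∈ Set.Ioo y (y + ε)) :
    HasDerivAt (smoothStep y ε)
      (-(2 * ε * ((x - y - ε/2)^2 + ε^2/4) / ((x - y - ε/2)^2 - ε^2/4)^2 *
        Real.exp (-(2*ε*(x-y-ε/2)) / ((x-y-ε/2)^2 - ε^2/4))) /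
        (1 + Real.exp (-(2*ε*(x-y-ε/2)) / ((x-y-ε/2)^2 - ε^2/4)))^2) x := by
  obtain ⟨hx1, hx2⟩ := hx
  have hD : (x - y - ε/2)^2 - ε^2/4 ≠ 0 := by nlinarith
  have hN : HasDerivAt (fun x : ℝ => -(2 * ε * (x - y - ε / 2))) (-(2*ε)) x := by
    have h0 : HasDerivAt (fun x : ℝ => x - (y + ε / 2)) 1 x := by
      simpa using (hasDerivAt_id x).sub_const (y + ε/2)
    have h0' : HasDerivAt (fun x : ℝ => x - y - ε / 2) 1 x := by
      convert h0 using 2 with z; ring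
    have := (h0'.const_mul (2*ε)).neg
    simp only [mul_one] at this
    exact this
  have hDen : HasDerivAt (fun x : ℝ => (x - y - ε / 2)^2 - ε^2/4)
      (2 * (x - y - ε/2)) x := by
    have h0 : HasDerivAt (fun x : ℝ => x - (y + ε / 2)) 1 x := by
      simpa using (hasDerivAt_id x).sub_const (y + ε/2)
    have h0' : HasDerivAt (fun x : ℝ => x - y - ε / 2) 1 x := by
      convert h0 using 2 with z; ring
    simpa using (h0'.pow 2).sub_const (ε^2/4)
  have hg : HasDerivAt (fun x : ℝ => -(2 * ε * (x - y - ε / 2)) /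
      ((x - y - ε / 2)^2 - ε^2/4))
      ((-(2*ε) * ((x - y - ε/2)^2 - ε^2/4) - -(2 * ε * (x - y - ε / 2)) * (2 * (x - y - ε/2))) /
        ((x - y - ε/2)^2 - ε^2/4)^2) x := hN.div hDen hD
  have hg' : HasDerivAt (fun x : ℝ => -(2 * ε * (x - y - ε / 2)) /
      ((x - y - ε / 2)^2 - ε^2/4))
      (2 * ε * ((x - y - ε/2)^2 + ε^2/4) / ((x - y - ε/2)^2 - ε^2/4)^2) x := by
    convert hg using 2
    ring
  have hinner : HasDerivAt (fun x : ℝ => 1 + Real.exp (-(2 * ε * (x - y - ε / 2)) /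
      ((x - y - ε / 2)^2 - ε^2/4)))
      (Real.exp (-(2*ε*(x-y-ε/2)) / ((x-y-ε/2)^2 - ε^2/4)) *
        (2 * ε * ((x - y - ε/2)^2 + ε^2/4) / ((x - y - ε/2)^2 - ε^2/4)^2)) x :=
    (hg'.exp).const_add 1
  have hne : (1 + Real.exp (-(2*ε*(x-y-ε/2)) / ((x-y-ε/2)^2 - ε^2/4))) ≠ 0 := by
    positivity
  have hf := hinner.inv hne
  have heq : smoothStep y ε =ᶠ[nhds x] fun x =>
      (1 + Real.exp (-(2 * ε * (x - y - ε / 2)) /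
        ((x - y - ε / 2) ^ 2 - ε ^ 2 / 4)))⁻¹ := by
    filter_upwards [IsOpen.mem_nhds isOpen_Ioo (Set.mem_Ioo.mpr ⟨hx1, hx2⟩)] with z hz
    obtain ⟨hz1, hz2⟩ := hz
    simp only [smoothStep, if_neg (not_le.mpr hz1), if_neg (not_le.mpr hz2)]
  refine HasDerivAt.congr_of_eventuallyEq ?_ heq
  convert hf using 1
  · rfl
  · rfl
  ring

lemma smoothStep_abs_deriv_le (y ε : ℝ) (hε : 0 < ε) {x : ℝ} (hx : x ∈ Set.Ioo y (y + ε)) :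
    |deriv (smoothStep y ε) x| ≤ 2 / ε := by
  rw [(smoothStep_hasDerivAt y ε hε hx).deriv]
  obtain ⟨hx1, hx2⟩ := hx
  set t := x - y - ε/2 with ht
  set D := t^2 - ε^2/4 with hDdef
  set G := -(2*ε*t)/D with hGdef
  have hD_ne : D ≠ 0 := by rw [hDdef]; nlinarith
  have hE := Real.exp_pos G
  have hGD : G * D = -(2*ε*t) := div_mul_cancel₀ _ hD_ne
  have hrw : -(2*ε*(t^2+ε^2/4)/D^2 * Real.exp G) / (1+Real.exp G)^2 =
      -(2*ε*(t^2+ε^2/4)/D^2 * Real.exp G / (1+Real.exp G)^2) := by ring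
  rw [hrw, abs_neg, abs_of_nonneg (by positivity)]
  have hkey : Real.exp G / (1+Real.exp G)^2 ≤ 1/(4+G^2) := key_exp G
  have hA : (0:ℝ) ≤ 2*ε*(t^2+ε^2/4)/D^2 := by positivity
  calc 2*ε*(t^2+ε^2/4)/D^2 * Real.exp G / (1+Real.exp G)^2
      = 2*ε*(t^2+ε^2/4)/D^2 * (Real.exp G / (1+Real.exp G)^2) := by ring
    _ ≤ 2*ε*(t^2+ε^2/4)/D^2 * (1/(4+G^2)) := by
        apply mul_le_mul_of_nonneg_left hkey hA
    _ = (2*ε*(t^2+ε^2/4)) * 1 / (D^2 * (4+G^2)) := by rw [div_mul_div_comm]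
    _ ≤ 2/ε := by
        rw [mul_one]
        have h4G : D^2 * (4+G^2) = 4*D^2 + 4*ε^2*t^2 := by
          have h5 : D^2*(4+G^2) = 4*D^2 + (G*D)^2 := by ring
          rw [h5, hGD]; ring
        have hpos : (0:ℝ) < 4*D^2 + 4*ε^2*t^2 := by
          have : (0:ℝ) < D^2 := by positivity
          nlinarith
        rw [h4G, div_le_div_iff₀ hpos hε]
        rw [hDdef]
        nlinarith [sq_nonneg t, sq_nonneg (ε*t), sq_nonneg (t^2)]

lemma smoothStep_deriv_mid (y ε : ℝ) (hε : 0 < ε) :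
    deriv (smoothStep y ε) (y + ε/2) = -(2/ε) := by
  have hx : y + ε/2 ∈ Set.Ioo y (y + ε) := ⟨by linarith, by linarith⟩
  rw [(smoothStep_hasDerivAt y ε hε hx).deriv]
  have ht : y + ε/2 - y - ε/2 = 0 := by ring
  rw [ht]
  have hε' := hε.ne'
  norm_num [Real.exp_zero]
  field_simp

lemma smoothStep_deriv_zero_left (y ε : ℝ) (hε : 0 < ε) {x : ℝ} (hx : x ≤ y) :
    deriv (smoothStep y ε) x = 0 := by
  rcases lt_or_eq_of_le hx with hlt | rfl
  · have heq : smoothStep y ε =ᶠ[nhds x] fun _ => (1:ℝ) := by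
      filter_upwards [Iio_mem_nhds hlt] with z hz
      simp [smoothStep, le_of_lt (Set.mem_Iio.mp hz)]
    rw [heq.deriv_eq, deriv_const]
  · by_cases hdiff : DifferentiableAt ℝ (smoothStep x ε) x
    · have h1 : derivWithin (smoothStep x ε) (Set.Iio x) x = deriv (smoothStep x ε) x :=
        hdiff.derivWithin (uniqueDiffWithinAt_Iio x)
      have h2 : derivWithin (smoothStep x ε) (Set.Iio x) x =
          derivWithin (fun _ => (1:ℝ)) (Set.Iio x) x := by
        apply derivWithin_congr
        · intro z hz
          simp [smoothStep, le_of_lt (Set.mem_Iio.mp hz)]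
        · simp [smoothStep]
      rw [← h1, h2]
      exact (hasDerivWithinAt_const _ _ _).derivWithin (uniqueDiffWithinAt_Iio _)
    · exact deriv_zero_of_not_differentiableAt hdiff

lemma smoothStep_deriv_zero_right (y ε : ℝ) (hε : 0 < ε) {x : ℝ} (hx : y + ε ≤ x) :
    deriv (smoothStep y ε) x = 0 := by
  rcases lt_or_eq_of_le hx with hlt | heq
  · have heq : smoothStep y ε =ᶠ[nhds x] fun _ => (0:ℝ) := by
      filter_upwards [Ioi_mem_nhds hlt] with z hz
      have hz1 : ¬ z ≤ y := by simp only [Set.mem_Ioi] at hz; push_neg; linarith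
      have hz2 : y + ε ≤ z := le_of_lt hz
      simp [smoothStep, hz1, hz2]
    rw [heq.deriv_eq, deriv_const]
  · subst heq
    by_cases hdiff : DifferentiableAt ℝ (smoothStep y ε) (y + ε)
    · have h1 : derivWithin (smoothStep y ε) (Set.Ioi (y+ε)) (y+ε) =
          deriv (smoothStep y ε) (y+ε) :=
        hdiff.derivWithin (uniqueDiffWithinAt_Ioi (y+ε))
      have h2 : derivWithin (smoothStep y ε) (Set.Ioi (y+ε)) (y+ε) =
          derivWithin (fun _ => (0:ℝ)) (Set.Ioi (y+ε)) (y+ε) := by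
        apply derivWithin_congr
        · intro z hz
          simp only [Set.mem_Ioi] at hz
          have hz1 : ¬ z ≤ y := by push_neg; linarith
          simp [smoothStep, hz1, le_of_lt hz]
        · have h1' : ¬ y + ε ≤ y := by linarith
          simp [smoothStep, h1', le_refl]
      rw [← h1, h2]
      exact (hasDerivWithinAt_const _ _ _).derivWithin (uniqueDiffWithinAt_Ioi _)
    · exact deriv_zero_of_not_differentiableAt hdiff

/-- `Θ_{y,ε}` is differentiable on `(y, y+ε)` and
`sup_{x ∈ ℝ} |Θ_{y,ε}′(x)| = 2/ε`. -/
theorem smoothStep_differentiable_and_sup_deriv (y ε : ℝ) (hε : 0 < ε) :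
    (∀ x ∈ Set.Ioo y (y + ε), DifferentiableAt ℝ (smoothStep y ε) x) ∧
    (⨆ x : ℝ, |deriv (smoothStep y ε) x|) = 2 / ε := by
  have hbound : ∀ x : ℝ, |deriv (smoothStep y ε) x| ≤ 2 / ε := by
    intro x
    rcases le_or_gt x y with h1 | h1
    · rw [smoothStep_deriv_zero_left y ε hε h1, abs_zero]; positivity
    · rcases le_or_gt (y + ε) x with h2 | h2
      · rw [smoothStep_deriv_zero_right y ε hε h2, abs_zero]; positivity
      · exact smoothStep_abs_deriv_le y ε hε ⟨h1, h2⟩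
  constructor
  · intro x hx
    exact (smoothStep_hasDerivAt y ε hε hx).differentiableAt
  · have hmid : |deriv (smoothStep y ε) (y + ε/2)| = 2/ε := by
      rw [smoothStep_deriv_mid y ε hε, abs_neg, abs_of_nonneg (by positivity)]
    refine le_antisymm (ciSup_le hbound) ?_
    calc 2/ε = |deriv (smoothStep y ε) (y + ε/2)| := hmid.symm
      _ ≤ ⨆ x : ℝ, |deriv (smoothStep y ε) x| :=
        le_ciSup ⟨2/ε, by rintro _ ⟨x, rfl⟩; exact hbound x⟩ (y + ε/2)
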